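/- The language {aⁿbⁿcⁿ : n ≥ 0} over Σ = {a,b,c} is recognizable by a C-RASP program without positional relations: a word w is in the language iff (i) every a in w is preceded only by a's, (ii) every b is preceded only by a's and b's, and (iii) the total counts of a, b, c in w are equal. Formally, conditions (i) and (ii) are expressed via counting positions violating the prefix conditions, and condition (iii) via comparisons of counts. -/

import Mathlib

mutual
/-- Syntax of C-RASP programs without positional relations: Boolean-valued
operations. A program (a sequence of operations, each possibly referring to
earlier ones) is represented by the expression tree of its final
Boolean-valued operation. -/
inductive BExpr (α : Type) : Type
  | tok : α → BExpr α                      -- initial operation `Q_σ(i)`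
  | not : BExpr α → BExpr α                -- Boolean negation
  | and : BExpr α → BExpr α → BExpr α      -- Boolean conjunction
  | top : BExpr α                          -- constant ⊤
  | le  : CExpr α → CExpr α → BExpr α      -- comparison `C₁(i) ≤ C₂(i)`
/-- Count-valued C-RASP operations. -/
inductive CExpr (α : Type) : Type
  | count : BExpr α → CExpr α              -- `#{j ≤ i : P(j)}`
  | cond  : BExpr α → CExpr α → CExpr α → CExpr α  -- conditional
  | add : CExpr α → CExpr α → CExpr α      -- addition
  | sub : CExpr α → CExpr α → CExpr α      -- subtraction
  | one : CExpr α                          -- constant 1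
end

mutual
/-- Evaluation of a Boolean-valued C-RASP operation on word `w` at
(0-based) position `i`. -/
def BExpr.eval {α : Type} [DecidableEq α] (w : List α) : BExpr α → ℕ → Bool
  | .tok σ, i => decide (w[i]? = some σ)
  | .not b, i => ! b.eval w i
  | .and b₁ b₂, i => b₁.eval w i && b₂.eval w i
  | .top, _ => true
  | .le c₁ c₂, i => decide (c₁.eval w i ≤ c₂.eval w i)
/-- Evaluation of a count-valued C-RASP operation on word `w` at position `i`. -/
def CExpr.eval {α : Type} [DecidableEq α] (w : List α) : CExpr α → ℕ → ℤ
  | .count b, i => ((List.range (i + 1)).countP (fun j => b.eval w j) : ℤ)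
  | .cond b c₁ c₂, i => if b.eval w i then c₁.eval w i else c₂.eval w i
  | .add c₁ c₂, i => c₁.eval w i + c₂.eval w i
  | .sub c₁ c₂, i => c₁.eval w i - c₂.eval w i
  | .one, _ => 1
end

/-- A C-RASP program accepts a word iff its final Boolean-valued operation is
true at the last position of the word. -/
def BExpr.accepts {α : Type} [DecidableEq α] (P : BExpr α) (w : List α) : Prop :=
  P.eval w (w.length - 1) = true

/-- The three-letter alphabet `{a, b, c}`. -/
inductive ABC : Type
  | a | b | c
deriving DecidableEq

/-! A word is aⁿbⁿcⁿ iff it is sorted for a < b < c and its three letter counts agree, because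
a sorted word is determined by its letter counts. A word is unsorted iff some position carries a
letter smaller than one seen before it; a C-RASP program detects such positions with counts of
earlier tokens, and the letter counts of the whole word are the prefix counts at its last
position. -/

namespace BExpr

variable {α : Type} [DecidableEq α] (w : List α) (i : ℕ)

def or (b₁ b₂ : BExpr α) : BExpr α := .not ((b₁.not).and (b₂.not))

def eq (c₁ c₂ : CExpr α) : BExpr α := (BExpr.le c₁ c₂).and (BExpr.le c₂ c₁)

def ever (b : BExpr α) : BExpr α := .le .one (.count b)

@[simp]
theorem eval_or (b₁ b₂ : BExpr α) :
    (b₁.or b₂).eval w i = (b₁.eval w i || b₂.eval w i) := by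
  simp [BExpr.or, BExpr.eval]

@[simp]
theorem eval_eq (c₁ c₂ : CExpr α) :
    (eq c₁ c₂).eval w i = decide (c₁.eval w i = c₂.eval w i) := by
  simp [BExpr.eq, BExpr.eval, le_antisymm_iff]

@[simp]
theorem eval_ever (b : BExpr α) : (ever b).eval w i = true ↔ ∃ j ≤ i, b.eval w j = true := by
  simp [ever, BExpr.eval, CExpr.eval]

theorem eval_count_tok (σ : α) :
    (CExpr.count (.tok σ)).eval w i = ((w.take (i + 1)).count σ : ℤ) := by
  simp only [CExpr.eval, BExpr.eval, Nat.cast_inj]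
  induction i + 1 with
  | zero => simp
  | succ n ih =>
    rw [List.range_succ, List.countP_append, ih, List.take_add_one, List.count_append]
    cases h : w[n]? <;> simp [h, List.count_singleton]

end BExpr

theorem List.pairwise_iff_forall_getElem? {α : Type} {R : α → α → Prop} {l : List α}
    (hR : ∀ x, R x x) :
    l.Pairwise R ↔
      ∀ (i j : ℕ) x y, i ≤ j → l[i]? = some x → l[j]? = some y → R x y := by
  rw [List.pairwise_iff_getElem]
  constructor
  · intro h i j x y hij hx hy
    obtain ⟨hi, rfl⟩ := List.getElem?_eq_some_iff.mp hx
    obtain ⟨hj, rfl⟩ := List.getElem?_eq_some_iff.mp hy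
    rcases hij.lt_or_eq with hij | rfl
    · exact h i j hi hj hij
    · exact hR _
  · intro h i j hi hj hij
    exact h i j _ _ hij.le (List.getElem?_eq_getElem hi) (List.getElem?_eq_getElem hj)

namespace ABC

open BExpr

def rank : ABC → ℕ
  | a => 0
  | b => 1
  | c => 2

theorem rank_injective : Function.Injective rank := by
  intro x y; cases x <;> cases y <;> simp [rank]

theorem pairwise_rank_le_pattern (n : ℕ) :
    (List.replicate n a ++ List.replicate n b ++ List.replicate n c).Pairwise
      (rank · ≤ rank ·) := by
  simp [List.pairwise_append, List.pairwise_replicate, List.mem_replicate, rank]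

theorem exists_eq_pattern_iff (w : List ABC) :
    (∃ n, w = List.replicate n a ++ List.replicate n b ++ List.replicate n c) ↔
      w.Pairwise (rank · ≤ rank ·) ∧ w.count a = w.count b ∧ w.count b = w.count c := by
  constructor
  · rintro ⟨n, rfl⟩
    exact ⟨pairwise_rank_le_pattern n, by simp [List.count_replicate],
      by simp [List.count_replicate]⟩
  · rintro ⟨hw, hab, hbc⟩
    refine ⟨w.count a, List.Perm.eq_of_pairwise
      (fun x y _ _ hxy hyx => rank_injective (le_antisymm hxy hyx)) hw
      (pairwise_rank_le_pattern _) ?_⟩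
    rw [List.perm_iff_count]
    rintro (_ | _ | _) <;> simp [List.count_replicate, hab, hbc]

def descent : BExpr ABC :=
  ((tok a).and (ever ((tok b).or (tok c)))).or ((tok b).and (ever (tok c)))

theorem eval_descent (w : List ABC) (j : ℕ) :
    descent.eval w j = true ↔
      ∃ i ≤ j, ∃ x y, w[i]? = some x ∧ w[j]? = some y ∧ rank y < rank x := by
  simp only [descent, eval_or, BExpr.eval, eval_ever, Bool.or_eq_true, Bool.and_eq_true,
    decide_eq_true_eq]
  constructor
  · rintro (⟨hj, i, hi, hb | hc⟩ | ⟨hj, i, hi, hc⟩)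
    exacts [⟨i, hi, b, a, hb, hj, by decide⟩, ⟨i, hi, c, a, hc, hj, by decide⟩,
      ⟨i, hi, c, b, hc, hj, by decide⟩]
  · rintro ⟨i, hi, x, y, hx, hy, hxy⟩
    cases x <;> cases y <;> simp only [rank] at hxy <;> first | omega | aesop

theorem ever_descent_eq_false_iff {w : List ABC} {i : ℕ} (hi : w.length ≤ i + 1) :
    (ever descent).eval w i = false ↔ w.Pairwise (rank · ≤ rank ·) := by
  rw [List.pairwise_iff_forall_getElem? fun x => le_refl (rank x), ← Bool.not_eq_true,
    eval_ever]
  simp only [eval_descent, not_exists, not_and, not_lt]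
  constructor
  · intro h i j x y hij hx hy
    have hj : j < w.length := (List.getElem?_eq_some_iff.mp hy).1
    exact h j (by omega) i hij x y hx hy
  · intro h j _ i hij x y hx hy
    exact h i j x y hij hx hy

def abcProgram : BExpr ABC :=
  (ever descent).not.and
    ((eq (.count (tok a)) (.count (tok b))).and (eq (.count (tok b)) (.count (tok c))))

theorem accepts_abcProgram_iff (w : List ABC) :
    abcProgram.accepts w ↔
      w.Pairwise (rank · ≤ rank ·) ∧ w.count a = w.count b ∧ w.count b = w.count c := by
  have hlen : w.length ≤ w.length - 1 + 1 := by omega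
  simp only [accepts, abcProgram, BExpr.eval, eval_eq, eval_count_tok,
    List.take_of_length_le hlen, Bool.and_eq_true, Bool.not_eq_true',
    ever_descent_eq_false_iff hlen, decide_eq_true_eq, Nat.cast_inj]

end ABC

/-- The language `{aⁿbⁿcⁿ : n ≥ 0}` is recognizable by a C-RASP program
without positional relations. -/
theorem stmt17 :
    ∃ P : BExpr ABC, ∀ w : List ABC,
      P.accepts w ↔
        ∃ n : ℕ, w = List.replicate n ABC.a ++ List.replicate n ABC.b ++
          List.replicate n ABC.c :=
  ⟨ABC.abcProgram, fun w =>
    (ABC.accepts_abcProgram_iff w).trans (ABC.exists_eq_pattern_iff w).symm⟩
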